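/- Let F be a perfect field of characteristic 2 and 2 ≤ k ≤ n. Then N̄_k = { w ∧ e_{2n+1} : w ∈ W̄^sp_{k−1} }, where W̄^sp_{k−1} ⊆ ⋀^{k−1} V̄ is regarded as a subspace of ⋀^{k−1} V via the inclusion V̄ ⊆ V. In particular the linear map w ↦ w ∧ e_{2n+1} restricts to an isomorphism of F-vector spaces from W̄^sp_{k−1} onto N̄_k. -/

import Mathlib

open ExteriorAlgebra

noncomputable section

/-- The quadratic form `η(x) = Σ_{i=1}^n x_i x_{n+i} + x_{2n+1}²` on `F^{2n+1}`
(indices written 0-based). -/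
def eta (F : Type) [Field F] (n : ℕ) (x : Fin (2 * n + 1) → F) : F :=
  (∑ i : Fin n, x ⟨i.1, by have := i.2; omega⟩ * x ⟨n + i.1, by have := i.2; omega⟩)
    + x ⟨2 * n, by omega⟩ ^ 2

/-- `W_k°`: the span of the decomposable vectors `v_1 ∧ ⋯ ∧ v_k` where `v_1, …, v_k` is a
basis of a totally singular `k`-dimensional subspace of `F^{2n+1}`. -/
def Wcirc (F : Type) [Field F] (n k : ℕ) :
    Submodule F (ExteriorAlgebra F (Fin (2 * n + 1) → F)) :=
  Submodule.span F {w | ∃ v : Fin k → (Fin (2 * n + 1) → F),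
    LinearIndependent F v ∧
    (∀ x ∈ Submodule.span F (Set.range v), eta F n x = 0) ∧
    w = ExteriorAlgebra.ιMulti F k v}

/-- The alternating form `ς(x,y) = Σ_{i=1}^n (x_i y_{n+i} − x_{n+i} y_i)` on `F^{2n}`
(indices written 0-based). -/
def zeta (F : Type) [Field F] (n : ℕ) (x y : Fin (2 * n) → F) : F :=
  ∑ i : Fin n, (x ⟨i.1, by have := i.2; omega⟩ * y ⟨n + i.1, by have := i.2; omega⟩
    - x ⟨n + i.1, by have := i.2; omega⟩ * y ⟨i.1, by have := i.2; omega⟩)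

/-- `W̄^sp_j`: the span of the decomposable vectors `v_1 ∧ ⋯ ∧ v_j` where `v_1, …, v_j` is a
basis of a totally isotropic `j`-dimensional subspace of `F^{2n}`. -/
def Wsp (F : Type) [Field F] (n j : ℕ) :
    Submodule F (ExteriorAlgebra F (Fin (2 * n) → F)) :=
  Submodule.span F {w | ∃ v : Fin j → (Fin (2 * n) → F),
    LinearIndependent F v ∧
    (∀ x ∈ Submodule.span F (Set.range v), ∀ y ∈ Submodule.span F (Set.range v),
      zeta F n x y = 0) ∧
    w = ExteriorAlgebra.ιMulti F j v}

/-- The inclusion `V̄ = F^{2n} ↪ V = F^{2n+1}` (extension by zero on the last coordinate). -/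
def incl (F : Type) [Field F] (n : ℕ) : (Fin (2 * n) → F) →ₗ[F] (Fin (2 * n + 1) → F) :=
  Function.ExtendByZero.linearMap F (Fin.castLE (by omega))

/-- The vector `e_{2n+1}` spanning the nucleus of `η` (0-based index `2n`). -/
def eVec (F : Type) [Field F] (n : ℕ) : Fin (2 * n + 1) → F :=
  Pi.single (⟨2 * n, by omega⟩ : Fin (2 * n + 1)) 1

/-- The nucleus subspace `N̄_k`: the span of the vectors `x_1 ∧ ⋯ ∧ x_{k−1} ∧ e_{2n+1}`
where `x_1, …, x_{k−1}` is a basis of a totally singular `(k−1)`-dimensional subspace. -/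
def Nbar (F : Type) [Field F] (n k : ℕ) :
    Submodule F (ExteriorAlgebra F (Fin (2 * n + 1) → F)) :=
  Submodule.span F {w | ∃ v : Fin (k - 1) → (Fin (2 * n + 1) → F),
    LinearIndependent F v ∧
    (∀ x ∈ Submodule.span F (Set.range v), eta F n x = 0) ∧
    w = ExteriorAlgebra.ιMulti F (k - 1) v * ExteriorAlgebra.ι F (eVec F n)}


/-!
In characteristic 2 the polar form of `η` is `ς` evaluated on the projections to `V̄`, and the
kernel `F e` of that projection (`e = e_{2n+1}`) meets no totally singular subspace, since
`η (c e) = c²`. So projecting a basis of a totally singular subspace gives a basis of a totally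
isotropic one; conversely a basis `u_i` of a totally isotropic subspace lifts to the totally
singular basis `u_i + √η(u_i) e`, the square roots existing because `F` is perfect. Adding
multiples of `e` does not change `x_1 ∧ ⋯ ∧ x_{k-1} ∧ e`, so the two spanning sets correspond
under `w ↦ w ∧ e`. Right contraction with the last coordinate, which vanishes on `⋀ V̄`, recovers
`w` from `w ∧ e`.
-/

section General

variable {R M N : Type*} [CommRing R] [AddCommGroup M] [Module R M] [AddCommGroup N] [Module R N]
  {ι : Type*}

theorem LinearMap.BilinMap.eq_zero_of_mem_span (B : LinearMap.BilinMap R M N) {v : ι → M}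
    (hv : ∀ i j, B (v i) (v j) = 0) {x y : M} (hx : x ∈ Submodule.span R (Set.range v))
    (hy : y ∈ Submodule.span R (Set.range v)) : B x y = 0 := by
  have hxv : ∀ j, B x (v j) = 0 := fun j =>
    LinearMap.eqOn_span (f := B.flip (v j)) (g := 0) (by rintro _ ⟨i, rfl⟩; exact hv i j) hx
  exact LinearMap.eqOn_span (f := B x) (g := 0) (by rintro _ ⟨j, rfl⟩; exact hxv j) hy

theorem QuadraticMap.eq_zero_of_mem_span (Q : QuadraticMap R M N) {v : ι → M}
    (hQ : ∀ i, Q (v i) = 0) (hpolar : ∀ i j, QuadraticMap.polar Q (v i) (v j) = 0) {x : M}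
    (hx : x ∈ Submodule.span R (Set.range v)) : Q x = 0 := by
  induction hx using Submodule.span_induction with
  | mem _ h => obtain ⟨i, rfl⟩ := h; exact hQ i
  | zero => exact Q.map_zero
  | add a b ha hb hQa hQb =>
    have := Q.polarBilin.eq_zero_of_mem_span hpolar ha hb
    rw [QuadraticMap.polarBilin_apply_apply, QuadraticMap.polar, hQa, hQb] at this
    simpa using this
  | smul c a _ hQa => rw [Q.map_smul, hQa, smul_zero]

end General

namespace ExteriorAlgebra

variable {R M N : Type*} [CommRing R] [AddCommGroup M] [Module R M] [AddCommGroup N] [Module R N]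

theorem ιMulti_snoc {m : ℕ} (u : Fin m → M) (e : M) :
    ιMulti R (m + 1) (Fin.snoc u e) = ιMulti R m u * ι R e := by
  rw [ιMulti_apply, ιMulti_apply, List.ofFn_succ', List.prod_concat]
  simp

theorem ι_mul_ιMulti_mul_ι (e : M) {m : ℕ} (u : Fin m → M) :
    ι R e * ιMulti R m u * ι R e = 0 := by
  rw [mul_assoc, ← ιMulti_snoc]
  have hcons : ι R e * ιMulti R (m + 1) (Fin.snoc u e) =
      ιMulti R (m + 2) (Fin.cons e (Fin.snoc u e)) := by
    rw [ιMulti_succ_apply (Fin.cons e (Fin.snoc u e) : Fin (m + 2) → M)]; rfl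
  rw [hcons]
  exact (ιMulti R _).map_eq_zero_of_eq _ (i := 0) (j := Fin.last _) (by simp) (by simp)

theorem ιMulti_add_smul_mul_ι (e : M) {m : ℕ} (u : Fin m → M) (c : Fin m → R) :
    ιMulti R m (fun i => u i + c i • e) * ι R e = ιMulti R m u * ι R e := by
  induction m with
  | zero => simp
  | succ m ih =>
    rw [ιMulti_succ_apply, ιMulti_succ_apply, mul_assoc, mul_assoc,
      ← ih (Matrix.vecTail u) (Matrix.vecTail c), map_add, map_smul, add_mul, smul_mul_assoc,
      ← mul_assoc (ι R e), ι_mul_ιMulti_mul_ι, smul_zero, add_zero]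
    rfl

theorem contractRight_map_eq_zero {f : N →ₗ[R] M} {d : Module.Dual R M} (hd : d ∘ₗ f = 0)
    (x : ExteriorAlgebra R N) : CliffordAlgebra.contractRight (map f x) d = 0 := by
  induction x using CliffordAlgebra.right_induction with
  | algebraMap r => rw [AlgHom.commutes, CliffordAlgebra.contractRight_algebraMap]
  | add x y hx hy => rw [map_add, map_add, LinearMap.add_apply, hx, hy, add_zero]
  | mul_ι m x hx =>
    rw [map_mul, map_apply_ι, CliffordAlgebra.contractRight_mul_ι, hx, zero_mul, sub_zero,
      ← LinearMap.comp_apply, hd, LinearMap.zero_apply, zero_smul]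

theorem injOn_mulRight_ι_range_map {f : N →ₗ[R] M} {d : Module.Dual R M} {e : M}
    (hd : d ∘ₗ f = 0) (he : d e = 1) :
    Set.InjOn (LinearMap.mulRight R (ι R e)) (Set.range (map f)) := by
  rintro _ ⟨a, rfl⟩ _ ⟨b, rfl⟩ hab
  simp only [LinearMap.mulRight_apply] at hab
  have key := CliffordAlgebra.contractRight_mul_ι (Q := 0) d e (map f (a - b))
  rw [map_sub, sub_mul, hab, sub_self, ← map_sub, contractRight_map_eq_zero hd, he, one_smul,
    zero_mul, sub_zero, map_zero, LinearMap.zero_apply] at key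
  exact sub_eq_zero.mp (by simpa using key.symm)

end ExteriorAlgebra

section Coordinates

variable {F : Type} [Field F] {n : ℕ}

variable (F n) in
def trunc : (Fin (2 * n + 1) → F) →ₗ[F] (Fin (2 * n) → F) :=
  LinearMap.funLeft F F (Fin.castLE (by omega))

variable (F n) in
def lastCoord : Module.Dual F (Fin (2 * n + 1) → F) :=
  LinearMap.proj ⟨2 * n, by omega⟩

theorem incl_apply_castLE (x : Fin (2 * n) → F) (j : Fin (2 * n)) :
    incl F n x (Fin.castLE (by omega) j) = x j :=
  (Fin.castLE_injective _).extend_apply x 0 j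

theorem trunc_incl (x : Fin (2 * n) → F) : trunc F n (incl F n x) = x :=
  funext (incl_apply_castLE x)

theorem trunc_eVec : trunc F n (eVec F n) = 0 := by
  ext j
  exact Pi.single_eq_of_ne (fun h => (Fin.val_eq_of_eq h).not_lt j.2) 1

theorem lastCoord_comp_incl : lastCoord F n ∘ₗ incl F n = 0 := by
  ext x
  refine Function.extend_apply' _ _ _ ?_
  rintro ⟨j, hj⟩
  exact (Fin.val_eq_of_eq hj).not_lt j.2

theorem lastCoord_eVec : lastCoord F n (eVec F n) = 1 :=
  Pi.single_eq_same _ 1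

theorem incl_trunc_add_smul_eVec (x : Fin (2 * n + 1) → F) :
    incl F n (trunc F n x) + lastCoord F n x • eVec F n = x := by
  ext j
  induction j using Fin.lastCases with
  | last =>
    have hi := LinearMap.congr_fun (lastCoord_comp_incl (F := F) (n := n)) (trunc F n x)
    simp only [LinearMap.comp_apply, LinearMap.zero_apply, lastCoord, LinearMap.proj_apply] at hi
    simp [Fin.last, hi, lastCoord, eVec]
  | cast i =>
    have he := congr_fun (trunc_eVec (F := F) (n := n)) i
    simp only [trunc, LinearMap.funLeft_apply, Pi.zero_apply] at he
    simp [show Fin.castSucc i = Fin.castLE (by omega) i from rfl, incl_apply_castLE, he, trunc,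
      LinearMap.funLeft_apply]

end Coordinates

section Forms

variable {F : Type} [Field F] {n : ℕ}

variable (F n) in
def zetaForm : LinearMap.BilinForm F (Fin (2 * n) → F) :=
  LinearMap.mk₂ F (zeta F n)
    (fun _ _ _ => by
      simp only [zeta, Pi.add_apply, ← Finset.sum_add_distrib]
      exact Finset.sum_congr rfl fun _ _ => by ring)
    (fun _ _ _ => by
      simp only [zeta, Pi.smul_apply, smul_eq_mul, Finset.mul_sum]
      exact Finset.sum_congr rfl fun _ _ => by ring)
    (fun _ _ _ => by
      simp only [zeta, Pi.add_apply, ← Finset.sum_add_distrib]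
      exact Finset.sum_congr rfl fun _ _ => by ring)
    (fun _ _ _ => by
      simp only [zeta, Pi.smul_apply, smul_eq_mul, Finset.mul_sum]
      exact Finset.sum_congr rfl fun _ _ => by ring)

theorem eta_smul (c : F) (x : Fin (2 * n + 1) → F) : eta F n (c • x) = (c * c) • eta F n x := by
  simp only [eta, Pi.smul_apply, smul_eq_mul, Finset.mul_sum, mul_add]
  congr 1
  · exact Finset.sum_congr rfl fun _ _ => by ring
  · ring

theorem eta_add [CharP F 2] (x y : Fin (2 * n + 1) → F) :
    eta F n (x + y) = eta F n x + eta F n y + zeta F n (trunc F n x) (trunc F n y) := by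
  simp only [eta, zeta, trunc, LinearMap.funLeft_apply, Pi.add_apply, CharTwo.add_sq]
  rw [add_add_add_comm, ← Finset.sum_add_distrib, add_right_comm, ← Finset.sum_add_distrib]
  congr 1
  refine Finset.sum_congr rfl fun _ _ => ?_
  rw [CharTwo.sub_eq_add]
  simp only [Fin.castLE_mk]
  ring

theorem zetaForm_apply (x y : Fin (2 * n) → F) : zetaForm F n x y = zeta F n x y :=
  rfl

variable (F n) in
def etaForm [CharP F 2] : QuadraticForm F (Fin (2 * n + 1) → F) where
  toFun := eta F n
  toFun_smul := eta_smul
  exists_companion' := ⟨(zetaForm F n).compl₁₂ (trunc F n) (trunc F n), eta_add⟩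

theorem etaForm_apply [CharP F 2] (x : Fin (2 * n + 1) → F) : etaForm F n x = eta F n x :=
  rfl

theorem polar_etaForm [CharP F 2] (x y : Fin (2 * n + 1) → F) :
    QuadraticMap.polar (etaForm F n) x y = zeta F n (trunc F n x) (trunc F n y) := by
  simp only [QuadraticMap.polar, etaForm, QuadraticMap.coe_mk, eta_add]
  ring

theorem eta_eVec : eta F n (eVec F n) = 1 := by
  have hzero : ∀ i : Fin n, eVec F n ⟨i, by omega⟩ = 0 := fun i =>
    Pi.single_eq_of_ne (fun h => by simp [Fin.ext_iff] at h; omega) 1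
  rw [eta, Finset.sum_eq_zero fun i _ => by rw [hzero, zero_mul]]
  simp [eVec]

end Forms

section Nucleus

variable {F : Type} [Field F] {n : ℕ} {κ : Type*}

theorem linearIndependent_trunc_comp {v : κ → Fin (2 * n + 1) → F} (hv : LinearIndependent F v)
    (hsing : ∀ x ∈ Submodule.span F (Set.range v), eta F n x = 0) :
    LinearIndependent F (trunc F n ∘ v) := by
  refine hv.map (Submodule.disjoint_def.2 fun x hx hker => ?_)
  have hx' := incl_trunc_add_smul_eVec x
  rw [LinearMap.mem_ker.1 hker, map_zero, zero_add] at hx'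
  have hsq := hsing x hx
  rw [← hx', eta_smul, eta_eVec, smul_eq_mul, mul_one] at hsq
  rw [← hx', mul_self_eq_zero.1 hsq, zero_smul]

theorem zeta_eq_zero_of_mem_span_trunc [CharP F 2] {v : κ → Fin (2 * n + 1) → F}
    (hsing : ∀ x ∈ Submodule.span F (Set.range v), eta F n x = 0) {x y : Fin (2 * n) → F}
    (hx : x ∈ Submodule.span F (Set.range (trunc F n ∘ v)))
    (hy : y ∈ Submodule.span F (Set.range (trunc F n ∘ v))) : zeta F n x y = 0 := by
  refine (zetaForm F n).eq_zero_of_mem_span (fun i j => ?_) hx hy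
  have hmem : ∀ i, v i ∈ Submodule.span F (Set.range v) := fun i => Submodule.subset_span ⟨i, rfl⟩
  rw [zetaForm_apply, Function.comp_apply, Function.comp_apply, ← polar_etaForm,
    QuadraticMap.polar, etaForm_apply, etaForm_apply, etaForm_apply,
    hsing _ (add_mem (hmem i) (hmem j)), hsing _ (hmem i), hsing _ (hmem j), sub_zero, sub_zero]

theorem eta_incl_add_smul_eVec [CharP F 2] (y : Fin (2 * n) → F) (c : F) :
    eta F n (incl F n y + c • eVec F n) = eta F n (incl F n y) + c * c := by
  rw [eta_add, eta_smul, eta_eVec, map_smul, trunc_eVec, smul_zero, ← zetaForm_apply, map_zero,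
    smul_eq_mul, mul_one, add_zero]

theorem ιMulti_mul_ι_eVec {m : ℕ} (v : Fin m → Fin (2 * n + 1) → F) :
    ιMulti F m v * ι F (eVec F n) =
      ExteriorAlgebra.map (incl F n) (ιMulti F m (trunc F n ∘ v)) * ι F (eVec F n) := by
  rw [map_apply_ιMulti,
    ← ιMulti_add_smul_mul_ι (eVec F n) (incl F n ∘ trunc F n ∘ v) (fun i => lastCoord F n (v i))]
  simp only [Function.comp_apply, incl_trunc_add_smul_eVec]

variable (F n)

theorem nbar_le_map_wsp [CharP F 2] (k : ℕ) :
    Nbar F n k ≤ ((Wsp F n (k - 1)).map (ExteriorAlgebra.map (incl F n)).toLinearMap).map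
      (LinearMap.mulRight F (ι F (eVec F n))) := by
  rw [Nbar, Submodule.span_le]
  rintro _ ⟨v, hv, hsing, rfl⟩
  rw [ιMulti_mul_ι_eVec]
  exact Submodule.mem_map_of_mem (Submodule.mem_map_of_mem (Submodule.subset_span
    ⟨_, linearIndependent_trunc_comp hv hsing,
      fun _ hx _ hy => zeta_eq_zero_of_mem_span_trunc hsing hx hy, rfl⟩))

theorem map_wsp_le_nbar [CharP F 2] [PerfectField F] (k : ℕ) :
    ((Wsp F n (k - 1)).map (ExteriorAlgebra.map (incl F n)).toLinearMap).map
      (LinearMap.mulRight F (ι F (eVec F n))) ≤ Nbar F n k := by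
  rw [Wsp, Submodule.map_span, Submodule.map_span, Submodule.span_le]
  rintro _ ⟨_, ⟨_, ⟨u, hu, hiso, rfl⟩, rfl⟩, rfl⟩
  choose c hc using fun i => surjective_frobenius F 2 (eta F n (incl F n (u i)))
  set x := fun i => incl F n (u i) + c i • eVec F n
  have htrunc : trunc F n ∘ x = u := funext fun i => by
    simp [x, trunc_incl, trunc_eVec]
  have hsing : ∀ z ∈ Submodule.span F (Set.range x), eta F n z = 0 := fun z hz => by
    refine (etaForm F n).eq_zero_of_mem_span (fun i => ?_) (fun i j => ?_) hz
    · rw [etaForm_apply, eta_incl_add_smul_eVec, ← pow_two, ← frobenius_def, hc,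
        CharTwo.add_self_eq_zero]
    · rw [polar_etaForm, ← Function.comp_apply (f := trunc F n),
        ← Function.comp_apply (f := trunc F n) (x := j), htrunc]
      exact hiso _ (Submodule.subset_span ⟨i, rfl⟩) _ (Submodule.subset_span ⟨j, rfl⟩)
  refine Submodule.subset_span ⟨x, LinearIndependent.of_comp (trunc F n) (htrunc ▸ hu), hsing, ?_⟩
  rw [ιMulti_mul_ι_eVec, htrunc]
  rfl

end Nucleus

theorem stmt9_general (F : Type) [Field F] [CharP F 2] [PerfectField F] (n k : ℕ) :
    Nbar F n k = Submodule.map (LinearMap.mulRight F (ExteriorAlgebra.ι F (eVec F n)))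
        (Submodule.map (ExteriorAlgebra.map (incl F n)).toLinearMap (Wsp F n (k - 1))) ∧
    Set.InjOn (LinearMap.mulRight F (ExteriorAlgebra.ι F (eVec F n)))
      (Submodule.map (ExteriorAlgebra.map (incl F n)).toLinearMap (Wsp F n (k - 1))) :=
  ⟨(nbar_le_map_wsp F n k).antisymm (map_wsp_le_nbar F n k),
    (injOn_mulRight_ι_range_map lastCoord_comp_incl lastCoord_eVec).mono
      (LinearMap.map_le_range (f := (ExteriorAlgebra.map (incl F n)).toLinearMap))⟩

/-- Let `F` be a perfect field with `char F = 2` and `2 ≤ k ≤ n`. Then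
`N̄_k = {w ∧ e_{2n+1} : w ∈ W̄^sp_{k−1}}` (with `W̄^sp_{k−1}` regarded inside `⋀^{k−1} V`
via the inclusion `V̄ ⊆ V`), and the map `w ↦ w ∧ e_{2n+1}` restricts to an isomorphism
(in particular an injection) from `W̄^sp_{k−1}` onto `N̄_k`. -/
theorem stmt9 (F : Type) [Field F] [CharP F 2] [PerfectField F] (n k : ℕ)
    (hk : 2 ≤ k) (hkn : k ≤ n) :
    Nbar F n k = Submodule.map (LinearMap.mulRight F (ExteriorAlgebra.ι F (eVec F n)))
        (Submodule.map (ExteriorAlgebra.map (incl F n)).toLinearMap (Wsp F n (k - 1))) ∧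
    Set.InjOn (LinearMap.mulRight F (ExteriorAlgebra.ι F (eVec F n)))
      (Submodule.map (ExteriorAlgebra.map (incl F n)).toLinearMap (Wsp F n (k - 1))) :=
  stmt9_general F n k
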